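/- Let k ≥ 2 be an integer and let p be a pattern containing exactly k distinct variables, each of which occurs at least 4 times in p. Then for every n ≥ 0, there are at least 1.94^n words of length n over a 2-letter alphabet that avoid p. -/

import Mathlib

/-!
Let `a n` count the words of length `n` over `q` letters that avoid `p`; we show
`β * a n ≤ a (n + 1)` by strong induction on `n`. Of the `q * a n` one-letter extensions of
avoiding words, each one that contains an instance of `p` ends with an instance `h(p)` preceded
by an avoiding word, so there are at most `∑ h, a (n + 1 - |h(p)|)` of them. Since every variable
occurs at least `d` times, `|h(p)| ≥ d * ∑ v, |h v|`, and the induction hypothesis gives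
`a (n + 1 - m) ≤ β ^ (1 - m) * a n`. Summing the resulting geometric series over all `h` bounds
the failures by `β * a n * (x / (1 - x)) ^ k` with `x = q / β ^ d`; for `q = 2`, `d = 4`,
`β = 1.94` and `k ≥ 2` this is below `0.06 * a n`.
-/

/-- A word `w` is an instance of the pattern `p` if there is a non-erasing
substitution (equivalently, a non-erasing monoid morphism on free monoids)
sending `p` to `w`. -/
def IsInstance {Δ α : Type*} (p : List Δ) (w : List α) : Prop :=
  ∃ f : Δ → List α, (∀ v, f v ≠ []) ∧ (p.map f).flatten = w

/-- A word `w` avoids the pattern `p` if no factor of `w` is an instance of `p`. -/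
def Avoids {Δ α : Type*} (w : List α) (p : List Δ) : Prop :=
  ∀ x : List α, x <:+: w → ¬ IsInstance p x

open Finset

section

variable {α Δ : Type*}

theorem IsInstance.ne_nil {p : List Δ} {x : List α} (hp : p ≠ []) (hx : IsInstance p x) :
    x ≠ [] := by
  obtain ⟨f, hf, rfl⟩ := hx
  obtain ⟨v, q, rfl⟩ := List.exists_cons_of_ne_nil hp
  simp [hf v]

theorem Avoids.of_infix {p : List Δ} {u w : List α} (hw : Avoids w p) (h : u <:+: w) :
    Avoids u p :=
  fun x hx => hw x (hx.trans h)

theorem avoids_nil {p : List Δ} (hp : p ≠ []) : Avoids ([] : List α) p :=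
  fun _ hx hi => IsInstance.ne_nil hp hi (List.eq_nil_of_infix_nil hx)

theorem exists_append_eq_append_singleton_of_not_avoids {p : List Δ} (hp : p ≠ [])
    {w : List α} {c : α} (hw : Avoids w p) (h : ¬ Avoids (w ++ [c]) p) :
    ∃ u x, IsInstance p x ∧ Avoids u p ∧ u ++ x = w ++ [c] := by
  simp only [Avoids, not_forall, not_not] at h
  obtain ⟨x, ⟨s, t, hst⟩, hx⟩ := h
  rcases List.eq_nil_or_concat t with rfl | ⟨t, b, rfl⟩
  · rw [List.append_nil] at hst
    obtain ⟨x, b, rfl⟩ := (List.eq_nil_or_concat x).resolve_left (IsInstance.ne_nil hp hx)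
    have hsx : s ++ x = w := (List.append_inj' (t₁ := [b]) (by simpa using hst) (by simp)).1
    exact ⟨s, _, hx, Avoids.of_infix hw ⟨[], x, by simpa using hsx⟩, hst⟩
  · have hsxt : s ++ x ++ t = w := (List.append_inj' (t₁ := [b]) (by simpa using hst) (by simp)).1
    exact absurd hx (hw x ⟨s, t, hsxt⟩)

theorem mul_sum_length_le_length_flatten_map [DecidableEq Δ] {p : List Δ} {d : ℕ}
    (hocc : ∀ v ∈ p, d ≤ p.count v) (f : Δ → List α) :
    d * ∑ v ∈ p.toFinset, (f v).length ≤ (p.map f).flatten.length := by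
  rw [List.length_flatten, List.map_map, sum_list_map_count, mul_sum]
  exact sum_le_sum fun v hv => by
    simpa using Nat.mul_le_mul_right _ (hocc v (List.mem_toFinset.mp hv))

section Words

variable (α) [Fintype α]

def wordsOfLength (n : ℕ) : Finset (List α) :=
  (univ : Finset (List.Vector α n)).map ⟨List.Vector.toList, List.Vector.toList_injective⟩

variable {α}

@[simp]
theorem mem_wordsOfLength {n : ℕ} {w : List α} : w ∈ wordsOfLength α n ↔ w.length = n := by
  simp only [wordsOfLength, mem_map, mem_univ, true_and, Function.Embedding.coeFn_mk]
  exact ⟨fun ⟨v, hv⟩ => hv ▸ v.toList_length, fun h => ⟨⟨w, h⟩, rfl⟩⟩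

theorem card_wordsOfLength (n : ℕ) : #(wordsOfLength α n) = Fintype.card α ^ n := by
  rw [wordsOfLength, card_map, card_univ, card_vector]

variable [DecidableEq α]

variable (α) in
def nonemptyWordsUpTo (N : ℕ) : Finset (List α) :=
  (Ico 1 (N + 1)).biUnion (wordsOfLength α)

theorem mem_nonemptyWordsUpTo {N : ℕ} {w : List α} :
    w ∈ nonemptyWordsUpTo α N ↔ w ≠ [] ∧ w.length ≤ N := by
  simp [nonemptyWordsUpTo, ← List.length_pos_iff, Nat.one_le_iff_ne_zero]

theorem sum_pow_length_nonemptyWordsUpTo_le {y : ℝ} (hy : 0 ≤ y)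
    (hqy : Fintype.card α * y < 1) (N : ℕ) :
    ∑ w ∈ nonemptyWordsUpTo α N, y ^ w.length ≤
      Fintype.card α * y / (1 - Fintype.card α * y) := by
  have hdisj : (↑(Ico 1 (N + 1)) : Set ℕ).PairwiseDisjoint (wordsOfLength α) :=
    fun i _ j _ hij => disjoint_left.mpr fun w hi hj =>
      hij ((mem_wordsOfLength.mp hi).symm.trans (mem_wordsOfLength.mp hj))
  calc ∑ w ∈ nonemptyWordsUpTo α N, y ^ w.length
      = ∑ ℓ ∈ Ico 1 (N + 1), (Fintype.card α * y) ^ ℓ := by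
        rw [nonemptyWordsUpTo, sum_biUnion hdisj]
        refine sum_congr rfl fun ℓ _ => ?_
        rw [sum_congr rfl fun w hw => by rw [mem_wordsOfLength.mp hw], sum_const,
          card_wordsOfLength, nsmul_eq_mul, mul_pow]
        push_cast
        rfl
    _ ≤ _ := (geom_sum_Ico_le_of_lt_one (by positivity) hqy).trans_eq (by rw [pow_one])

end Words

section Substitutions

variable [DecidableEq Δ]

-- `g` is defined on the variables of `p` only, so that substitutions with values of bounded
-- length form a finite set.
def substitute (p : List Δ) (g : p.toFinset → List α) : List α :=
  (p.map fun v => if h : v ∈ p.toFinset then g ⟨v, h⟩ else []).flatten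

theorem substitute_restrict (p : List Δ) (f : Δ → List α) :
    substitute p (fun v => f v) = (p.map f).flatten := by
  rw [substitute]
  congr 1
  exact List.map_congr_left fun v hv => dif_pos (List.mem_toFinset.mpr hv)

theorem mul_sum_length_le_length_substitute {p : List Δ} {d : ℕ}
    (hocc : ∀ v ∈ p, d ≤ p.count v) (g : p.toFinset → List α) :
    d * ∑ v, (g v).length ≤ (substitute p g).length := by
  refine le_of_eq_of_le ?_ (mul_sum_length_le_length_flatten_map hocc _)
  rw [← sum_coe_sort p.toFinset]
  simp only [coe_mem, dite_true]

variable [Fintype α] [DecidableEq α]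

variable (α) in
def substitutions (p : List Δ) (N : ℕ) : Finset (p.toFinset → List α) :=
  Fintype.piFinset fun _ => nonemptyWordsUpTo α N

variable (α) in
def shortSubstitutions (p : List Δ) (N : ℕ) : Finset (p.toFinset → List α) :=
  (substitutions α p N).filter fun g => (substitute p g).length ∈ Icc 1 N

theorem sum_substitutions_prod_pow_length (p : List Δ) (N : ℕ) (y : ℝ) :
    ∑ g ∈ substitutions α p N, ∏ v, y ^ (g v).length =
      (∑ w ∈ nonemptyWordsUpTo α N, y ^ w.length) ^ #p.toFinset := by
  rw [substitutions, ← prod_univ_sum (fun _ => nonemptyWordsUpTo α N) fun _ w => y ^ w.length,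
    prod_const, card_univ, Fintype.card_coe]

end Substitutions

section Counting

variable [Fintype α]

variable (α) in
open Classical in
noncomputable def avoiders (p : List Δ) (n : ℕ) : Finset (List α) :=
  (wordsOfLength α n).filter (Avoids · p)

theorem mem_avoiders {p : List Δ} {n : ℕ} {w : List α} :
    w ∈ avoiders α p n ↔ w.length = n ∧ Avoids w p := by
  simp [avoiders]

theorem card_avoiders_zero {p : List Δ} (hp : p ≠ []) : #(avoiders α p 0) = 1 := by
  rw [card_eq_one]
  refine ⟨[], eq_singleton_iff_unique_mem.mpr ⟨mem_avoiders.mpr ⟨rfl, avoids_nil hp⟩, ?_⟩⟩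
  exact fun w hw => List.eq_nil_of_length_eq_zero (mem_avoiders.mp hw).1

variable [DecidableEq α]

variable (α) in
noncomputable def extensions (p : List Δ) (n : ℕ) : Finset (List α) :=
  (avoiders α p n ×ˢ univ).image fun wc => wc.1 ++ [wc.2]

theorem card_extensions (p : List Δ) (n : ℕ) :
    #(extensions α p n) = #(avoiders α p n) * Fintype.card α := by
  rw [extensions, card_image_of_injective, card_product, card_univ]
  rintro ⟨w, c⟩ ⟨w', c'⟩ h
  obtain ⟨rfl, h⟩ := List.append_inj' h rfl
  simp_all

variable [DecidableEq Δ]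

theorem extensions_subset {p : List Δ} (hp : p ≠ []) (n : ℕ) :
    extensions α p n ⊆ avoiders α p (n + 1) ∪
      (shortSubstitutions α p (n + 1)).biUnion
        fun g => (avoiders α p (n + 1 - (substitute p g).length)).image (· ++ substitute p g) := by
  intro z hz
  obtain ⟨⟨w, c⟩, hwc, rfl⟩ := mem_image.mp hz
  obtain ⟨hwlen, hw⟩ := mem_avoiders.mp (mem_product.mp hwc).1
  by_cases h : Avoids (w ++ [c]) p
  · exact mem_union_left _ (mem_avoiders.mpr ⟨by simp [hwlen], h⟩)
  obtain ⟨u, x, ⟨f, hf, rfl⟩, hu, hux⟩ := exists_append_eq_append_singleton_of_not_avoids hp hw h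
  have hlen : u.length + (p.map f).flatten.length = n + 1 := by
    simpa [hwlen] using congrArg List.length hux
  have hpos : 0 < (p.map f).flatten.length :=
    List.length_pos_iff.mpr (IsInstance.ne_nil hp ⟨f, hf, rfl⟩)
  have hfv : ∀ v ∈ p, (f v).length ≤ n + 1 := fun v hv =>
    (List.sublist_flatten_of_mem (List.mem_map_of_mem hv)).length_le.trans (by omega)
  refine mem_union_right _ (mem_biUnion.mpr ⟨fun v => f v, mem_filter.mpr ⟨?_, ?_⟩, ?_⟩)
  · exact Fintype.mem_piFinset.mpr fun v =>
      mem_nonemptyWordsUpTo.mpr ⟨hf v, hfv v (List.mem_toFinset.mp v.2)⟩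
  · rw [substitute_restrict, mem_Icc]
    omega
  · rw [substitute_restrict]
    exact mem_image.mpr ⟨u, mem_avoiders.mpr ⟨by omega, hu⟩, hux⟩

theorem card_avoiders_mul_card_le {p : List Δ} (hp : p ≠ []) (n : ℕ) :
    #(avoiders α p n) * Fintype.card α ≤ #(avoiders α p (n + 1)) +
      ∑ g ∈ shortSubstitutions α p (n + 1),
        #(avoiders α p (n + 1 - (substitute p g).length)) := by
  rw [← card_extensions]
  refine (card_le_card (extensions_subset hp n)).trans ((card_union_le _ _).trans ?_)
  gcongr
  exact card_biUnion_le.trans (sum_le_sum fun _ _ => card_image_le)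

end Counting

theorem pow_sub_mul_le_of_forall_mul_le_succ {a : ℕ → ℝ} {β : ℝ} (hβ : 0 ≤ β) {n : ℕ}
    (h : ∀ m < n, β * a m ≤ a (m + 1)) {j : ℕ} (hj : j ≤ n) : β ^ (n - j) * a j ≤ a n := by
  induction n, hj using Nat.le_induction with
  | base => simp
  | succ n hjn ih =>
    rw [Nat.sub_add_comm hjn, pow_succ', mul_assoc]
    exact (mul_le_mul_of_nonneg_left (ih fun m hm => h m (by omega)) hβ).trans (h n (by omega))

section Growth

variable [Fintype α] [DecidableEq Δ] {p : List Δ} {d : ℕ} {β : ℝ}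

theorem card_avoiders_sub_length_substitute_le (hocc : ∀ v ∈ p, d ≤ p.count v) (hβ : 1 ≤ β)
    {n : ℕ} (ih : ∀ m < n, β * #(avoiders α p m) ≤ #(avoiders α p (m + 1)))
    {g : p.toFinset → List α} (hg : (substitute p g).length ∈ Icc 1 (n + 1)) :
    (#(avoiders α p (n + 1 - (substitute p g).length)) : ℝ) ≤
      β * #(avoiders α p n) * ∏ v, ((β ^ d)⁻¹) ^ (g v).length := by
  set m := (substitute p g).length
  set a : ℕ → ℝ := fun m => #(avoiders α p m)
  rw [mem_Icc] at hg
  have hratio : β ^ (m - 1) * a (n + 1 - m) ≤ a n := by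
    simpa [show n - (n + 1 - m) = m - 1 by omega] using
      pow_sub_mul_le_of_forall_mul_le_succ (by linarith) ih (j := n + 1 - m) (by omega)
  have hweight : (β⁻¹) ^ m ≤ ∏ v, ((β ^ d)⁻¹) ^ (g v).length := by
    simp only [← inv_pow, ← pow_mul]
    rw [prod_pow_eq_pow_sum, ← mul_sum]
    exact pow_le_pow_of_le_one (by positivity) (inv_le_one_of_one_le₀ hβ)
      (mul_sum_length_le_length_substitute hocc g)
  have hβ0 : 0 < β := by linarith
  calc a (n + 1 - m) = (β⁻¹) ^ m * (β * (β ^ (m - 1) * a (n + 1 - m))) := by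
        rw [← mul_assoc β, ← pow_succ', Nat.sub_add_cancel hg.1, ← mul_assoc, ← mul_pow,
          inv_mul_cancel₀ hβ0.ne', one_pow, one_mul]
    _ ≤ (∏ v, ((β ^ d)⁻¹) ^ (g v).length) * (β * a n) := by gcongr
    _ = β * a n * ∏ v, ((β ^ d)⁻¹) ^ (g v).length := mul_comm _ _

variable [DecidableEq α]

theorem mul_card_avoiders_le_card_avoiders_succ (hp : p ≠ [])
    (hocc : ∀ v ∈ p, d ≤ p.count v) (hβ : 1 ≤ β) (hq : Fintype.card α / β ^ d < 1)
    (hβq : β * (1 + (Fintype.card α / β ^ d / (1 - Fintype.card α / β ^ d)) ^ #p.toFinset) ≤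
      Fintype.card α)
    {n : ℕ} (ih : ∀ m < n, β * #(avoiders α p m) ≤ #(avoiders α p (m + 1))) :
    β * #(avoiders α p n) ≤ #(avoiders α p (n + 1)) := by
  set a : ℕ → ℝ := fun m => #(avoiders α p m)
  set x := Fintype.card α / β ^ d
  have hx : Fintype.card α * (β ^ d)⁻¹ = x := (div_eq_mul_inv _ _).symm
  have hbad : ∑ g ∈ shortSubstitutions α p (n + 1),
        a (n + 1 - (substitute p g).length) ≤ β * a n * (x / (1 - x)) ^ #p.toFinset :=
    calc _ ≤ ∑ g ∈ shortSubstitutions α p (n + 1),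
          β * a n * ∏ v, ((β ^ d)⁻¹) ^ (g v).length :=
          sum_le_sum fun g hg =>
            card_avoiders_sub_length_substitute_le hocc hβ ih (mem_filter.mp hg).2
      _ ≤ ∑ g ∈ substitutions α p (n + 1), β * a n * ∏ v, ((β ^ d)⁻¹) ^ (g v).length :=
          sum_le_sum_of_subset_of_nonneg (filter_subset _ _) fun _ _ _ => by positivity
      _ = β * a n *
            (∑ w ∈ nonemptyWordsUpTo α (n + 1), ((β ^ d)⁻¹) ^ w.length) ^ #p.toFinset := by
          rw [← mul_sum, sum_substitutions_prod_pow_length]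
      _ ≤ β * a n * (x / (1 - x)) ^ #p.toFinset := by
          gcongr
          rw [← hx]
          exact sum_pow_length_nonemptyWordsUpTo_le (by positivity) (hx ▸ hq) _
  have hcount : a n * Fintype.card α ≤
      a (n + 1) + ∑ g ∈ shortSubstitutions α p (n + 1), a (n + 1 - (substitute p g).length) := by
    simp only [a]
    exact_mod_cast card_avoiders_mul_card_le hp n
  linarith [mul_le_mul_of_nonneg_right hβq (Nat.cast_nonneg (α := ℝ) #(avoiders α p n))]

theorem pow_le_card_avoiders (hp : p ≠ []) (hocc : ∀ v ∈ p, d ≤ p.count v) (hβ : 1 ≤ β)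
    (hq : Fintype.card α / β ^ d < 1)
    (hβq : β * (1 + (Fintype.card α / β ^ d / (1 - Fintype.card α / β ^ d)) ^ #p.toFinset) ≤
      Fintype.card α) (n : ℕ) :
    β ^ n ≤ #(avoiders α p n) := by
  have hstep (n : ℕ) : β * #(avoiders α p n) ≤ #(avoiders α p (n + 1)) :=
    Nat.strong_induction_on n fun _ ih =>
      mul_card_avoiders_le_card_avoiders_succ hp hocc hβ hq hβq ih
  simpa [card_avoiders_zero hp] using
    pow_sub_mul_le_of_forall_mul_le_succ (a := fun m => (#(avoiders α p m) : ℝ)) (by linarith)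
      (fun m _ => hstep m) (Nat.zero_le n)

end Growth

end

/-- If each of the `k ≥ 2` variables of `p` occurs at least 4 times, then for
every `n` there are at least `1.94 ^ n` words of length `n` over a
2-letter alphabet avoiding `p`. -/
theorem growth_two {Δ : Type*} [DecidableEq Δ] (k : ℕ) (hk : 2 ≤ k)
    (p : List Δ) (hvars : p.toFinset.card = k)
    (hocc : ∀ v ∈ p, 4 ≤ p.count v) (n : ℕ) :
    ((1.94 : ℝ) ^ n) ≤
      ({w : List (Fin 2) | w.length = n ∧ Avoids w p}).ncard := by
  have hp : p ≠ [] := by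
    rintro rfl
    simp at hvars
    omega
  have hset : {w : List (Fin 2) | w.length = n ∧ Avoids w p} = avoiders (Fin 2) p n := by
    ext w
    simp [mem_avoiders]
  rw [hset, Set.ncard_coe_finset]
  refine pow_le_card_avoiders hp hocc (by norm_num) (by norm_num) ?_ n
  rw [hvars, Fintype.card_fin, Nat.cast_ofNat]
  set S : ℝ := 2 / 1.94 ^ 4 / (1 - 2 / 1.94 ^ 4)
  have hSk : S ^ k ≤ S ^ 2 := pow_le_pow_of_le_one (by norm_num [S]) (by norm_num [S]) hk
  calc 1.94 * (1 + S ^ k) ≤ 1.94 * (1 + S ^ 2) := by gcongr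
    _ ≤ 2 := by norm_num [S]
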